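/- arXiv:2002.10654 — 2 statements merged into one kernel-verified Lean document; each statement's English description precedes it below -/
import Mathlib

section
/- There is a universal constant C > 0 such that for every partial boolean function f : {0,1}^n → {0,1,*} and every balanced input distribution D = ½D0 + ½D1 for f: bicorr_{1/3}(f,D) ≤ corr_{1/3}(f,D) ≤ C · bicorr_{1/3}(f,D). -/
open Finset

/-- A deterministic decision tree over alphabet `α`, querying positions `ι`,
with output labels `β`.  A `node i ch` queries position `i` and has one child per symbol. -/
inductive DTree (α ι β : Type) : Type where
  | leaf : β → DTree α ι β
  | node : ι → (α → DTree α ι β) → DTree α ι β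

namespace DTree

/-- The output of the tree on input `x`. -/
def eval {α ι β : Type} : DTree α ι β → (ι → α) → β
  | .leaf b, _ => b
  | .node i ch, x => (ch (x i)).eval x

/-- The depth of a tree: the maximum number of queries along any root-to-leaf path. -/
def depth {α ι β : Type} [Fintype α] : DTree α ι β → ℕ
  | .leaf _ => 0
  | .node _ ch => 1 + Finset.univ.sup fun a => (ch a).depth

/-- `Input(ℓ)` for the leaf `ℓ` reached by `x`: the set of inputs that follow
the same root-to-leaf path as `x`. -/
def reach {α ι β : Type} : DTree α ι β → (ι → α) → Set (ι → α)
  | .leaf _, _ => Set.univ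
  | .node i ch, x => {y | y i = x i} ∩ (ch (x i)).reach x

/-- For a tree on `k` samples, the set `ℓ_j ⊆ Σ^n` of strings consistent with the
queries made to the `j`-th sample on the path followed by input `x`. -/
def reachJ {α β : Type} {k n : ℕ} :
    DTree α (Fin k × Fin n) β → ((Fin k × Fin n) → α) → Fin k → Set (Fin n → α)
  | .leaf _, _, _ => Set.univ
  | .node p ch, x, j =>
      (if p.1 = j then {y : Fin n → α | y p.2 = x p} else Set.univ) ∩ (ch (x p)).reachJ x j

end DTree

/-- Probability mass of a set `S` under (the mass function of) a distribution `D`. -/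
noncomputable def prS {γ : Type} [Fintype γ] (D : γ → ℝ) (S : Set γ) : ℝ :=
  ∑ x, S.indicator D x

/-- `D` is a probability mass function on the finite type `γ`. -/
def IsDist {γ : Type} [Fintype γ] (D : γ → ℝ) : Prop :=
  (∀ x, 0 ≤ D x) ∧ ∑ x, D x = 1

/-- Likelihood ratio `LR(S) = D1(S)/D0(S)`. -/
noncomputable def LR {γ : Type} [Fintype γ] (D0 D1 : γ → ℝ) (S : Set γ) : ℝ :=
  prS D1 S / prS D0 S

/-- The `k`-fold product distribution `D^k` on `k` samples (input flattened). -/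
noncomputable def prodD {α : Type} {n k : ℕ} (D : (Fin n → α) → ℝ) :
    ((Fin k × Fin n) → α) → ℝ :=
  fun x => ∏ j, D fun i => x (j, i)

/-- `T` is a `(δ, M)`-likelihood booster for `D0, D1`. -/
def LBooster {α β : Type} [Fintype α] {n : ℕ}
    (D0 D1 : (Fin n → α) → ℝ) (δ M : ℝ) (T : DTree α (Fin n) β) : Prop :=
  1 - δ ≤ prS D1 {x | M ≤ LR D0 D1 (T.reach x)}

/-- `T` is a `(δ, M)`-overall likelihood booster for `D0^k, D1^k`. -/
def OBooster {α β : Type} [Fintype α] {n k : ℕ}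
    (D0 D1 : (Fin n → α) → ℝ) (δ M : ℝ) (T : DTree α (Fin k × Fin n) β) : Prop :=
  1 - δ ≤ prS (prodD D1) {x | M ≤ ∏ j, LR D0 D1 (T.reachJ x j)}

open scoped Classical in
/-- `T` is a `(δ, ε, M)`-uniform likelihood booster for `D0^k, D1^k`. -/
def UBooster {α β : Type} [Fintype α] {n k : ℕ}
    (D0 D1 : (Fin n → α) → ℝ) (δ ε M : ℝ) (T : DTree α (Fin k × Fin n) β) : Prop :=
  1 - δ ≤ prS (prodD D1)
    {x | (1 - ε) * k ≤ ((Finset.univ.filter fun j => M ≤ LR D0 D1 (T.reachJ x j)).card : ℝ)}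

/-- `D = ½D0 + ½D1` is a balanced input distribution for the partial function `f`:
`D_b` is a distribution supported on `f⁻¹(b)`. -/
def BalancedDist {n : ℕ} (f : (Fin n → Bool) → Option Bool) (D0 D1 : (Fin n → Bool) → ℝ) : Prop :=
  IsDist D0 ∧ IsDist D1 ∧ (∀ x, D0 x ≠ 0 → f x = some false) ∧ ∀ x, D1 x ≠ 0 → f x = some true

/-- `corr_ε(f, D)`: the minimum over `k ≥ 1` of the least depth of a deterministic decision
tree on `k` samples which, for a uniformly random `b`, on input drawn from `D_b^k`
outputs `b` with probability at least `1 - ε`. -/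
noncomputable def corrC {n : ℕ} (ε : ℝ) (D0 D1 : (Fin n → Bool) → ℝ) : ℕ :=
  sInf {q | ∃ k, 0 < k ∧ ∃ T : DTree Bool (Fin k × Fin n) Bool, T.depth ≤ q ∧
    1 - ε ≤ (prS (prodD D0) {x | T.eval x = false} + prS (prodD D1) {x | T.eval x = true}) / 2}

/-- `sel_ε(f, D)`: the minimum over `k ≥ 1` of the least depth of a deterministic decision
tree on `k` samples from `D` outputting a pair `(i, f(xⁱ))` with probability at least `1 - ε`. -/
noncomputable def selC {n : ℕ} (ε : ℝ) (f : (Fin n → Bool) → Option Bool)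
    (D : (Fin n → Bool) → ℝ) : ℕ :=
  sInf {q | ∃ k, 0 < k ∧ ∃ T : DTree Bool (Fin k × Fin n) (Fin k × Bool), T.depth ≤ q ∧
    1 - ε ≤ prS (prodD D) {x | f (fun i => x ((T.eval x).1, i)) = some (T.eval x).2}}

/-- The product distribution `D_{ab}^k = (Da × Db)^k` on `k` pairs of samples. -/
noncomputable def prodD2 {n k : ℕ} (Da Db : (Fin n → Bool) → ℝ) :
    ((Fin k × Fin 2 × Fin n) → Bool) → ℝ :=
  fun x => ∏ j, (Da fun i => x (j, 0, i)) * Db fun i => x (j, 1, i)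

/-- `bicorr_ε(f, D)`: minimum over `k ≥ 1` of the least depth of a deterministic decision tree
that distinguishes `D_{01}^k` (output `false`) from `D_{10}^k` (output `true`) with
probability at least `1 - ε` for a uniformly random choice between the two. -/
noncomputable def bicorrC {n : ℕ} (ε : ℝ) (D0 D1 : (Fin n → Bool) → ℝ) : ℕ :=
  sInf {q | ∃ k, 0 < k ∧ ∃ T : DTree Bool (Fin k × Fin 2 × Fin n) Bool, T.depth ≤ q ∧
    1 - ε ≤ (prS (prodD2 D0 D1) {x | T.eval x = false} +
             prS (prodD2 D1 D0) {x | T.eval x = true}) / 2}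

/-- `R_ε(f)`: randomized query complexity, i.e. the least `q` such that some probability
distribution over deterministic decision trees of depth at most `q` outputs `f x`
with probability at least `1 - ε` for every `x` in the domain of `f`. -/
noncomputable def Rq {ι : Type} (ε : ℝ) (f : (ι → Bool) → Option Bool) : ℕ :=
  sInf {q | ∃ (p : ℕ → ℝ) (Ts : ℕ → DTree Bool ι Bool),
    (∀ i, 0 ≤ p i) ∧ (∑' i, p i) = 1 ∧ (∀ i, (Ts i).depth ≤ q) ∧
    ∀ x b, f x = some b → 1 - ε ≤ ∑' i, if (Ts i).eval x = b then p i else 0}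

/-- `corr_ε(f)`: the maximum of `corr_ε(f, D)` over balanced input distributions `D` for `f`. -/
noncomputable def corrMax {n : ℕ} (ε : ℝ) (f : (Fin n → Bool) → Option Bool) : ℕ :=
  sSup {q | ∃ D0 D1, BalancedDist f D0 D1 ∧ q = corrC ε D0 D1}

/-- `sel_ε(f)`: the maximum of `sel_ε(f, D)` over balanced input distributions `D` for `f`. -/
noncomputable def selMax {n : ℕ} (ε : ℝ) (f : (Fin n → Bool) → Option Bool) : ℕ :=
  sSup {q | ∃ D0 D1, BalancedDist f D0 D1 ∧ q = selC ε f fun x => (D0 x + D1 x) / 2}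
/-- The parity (XOR) of all bits of `x`. -/
def XORn {n : ℕ} (x : Fin n → Bool) : Bool :=
  decide ((Finset.univ.filter fun i => x i = true).card % 2 = 1)

/-- The parity of the bits of `x` in positions `≥ 2`. -/
def XORtail {n : ℕ} (x : Fin n → Bool) : Bool :=
  decide ((Finset.univ.filter fun i : Fin n => 2 ≤ (i : ℕ) ∧ x i = true).card % 2 = 1)

/-- `x` with the bits in block `B` flipped. -/
def flipB {n : ℕ} (x : Fin n → Bool) (B : Finset (Fin n)) : Fin n → Bool :=
  fun i => if i ∈ B then !(x i) else x i

/-- `B` is a sensitive block of `f` on `x`: `x^B` lies in the domain of `f` and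
`f(x^B) ≠ f(x)`. -/
def SensBlock {n : ℕ} (f : (Fin n → Bool) → Option Bool) (x : Fin n → Bool)
    (B : Finset (Fin n)) : Prop :=
  (f (flipB x B)).isSome ∧ f (flipB x B) ≠ f x

/-- Fractional block sensitivity `fbs(f) = max_x fbs(f, x)`, where `fbs(f,x)` is the value
of the fractional packing LP over the sensitive blocks of `x`. -/
noncomputable def fbs {n : ℕ} (f : (Fin n → Bool) → Option Bool) : ℝ :=
  sSup {r | ∃ x, (f x).isSome ∧ ∃ w : Finset (Fin n) → ℝ,
    (∀ B, 0 ≤ w B) ∧ (∀ B, w B ≤ 1) ∧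
    (∀ B, w B ≠ 0 → SensBlock f x B) ∧
    (∀ i, ∑ B ∈ Finset.univ.filter (fun B => i ∈ B), w B ≤ 1) ∧
    r = ∑ B, w B}

/-- The composed partial function `f ∘ g`, defined on `(x¹, …, xⁿ)` when every `xⁱ` is in
the domain of `g`, with value `f(g(x¹), …, g(xⁿ))`. -/
def compFG {n m : ℕ} (f : (Fin n → Bool) → Option Bool) (g : (Fin m → Bool) → Option Bool) :
    ((Fin n × Fin m) → Bool) → Option Bool :=
  fun x =>
    if h : ∀ i, (g fun s => x (i, s)).isSome then
      f fun i => (g fun s => x (i, s)).get (h i)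
    else none

/-- Number of queries that `T` makes into block `B` on input `x` (each query reads one bit
`(i, s)`, and counts if `i ∈ B`). -/
def countQ {m n : ℕ} {β : Type} (B : Finset (Fin n)) :
    DTree Bool (Fin n × Fin m) β → ((Fin n × Fin m) → Bool) → ℕ
  | .leaf _, _ => 0
  | .node p ch, x => (if p.1 ∈ B then 1 else 0) + countQ B (ch (x p)) x

/-- The Shaltiel distribution for `XOR_n`, `n = m + 2`: with probability 99/100 output `0`
followed by `n-1` uniform bits; with probability 1/100 output `1`, one uniform bit, `0^{n-2}`. -/
noncomputable def D16 (m : ℕ) : (Fin (m + 2) → Bool) → ℝ := fun x =>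
  (if x 0 = false then (99 / 100) * ((1:ℝ) / 2) ^ (m + 1) else 0) +
  (if x 0 = true ∧ (∀ i : Fin (m + 2), 2 ≤ (i : ℕ) → x i = false) then 1 / 200 else 0)

/-- The distribution of Theorem 2 for `XOR_n`, `n = m + 3`: sample `z` uniform on `n-2` bits,
`a := XOR(z)`, `b` uniform; output `a a z` w.p. 1/100 and `b b z` w.p. 99/100. -/
noncomputable def D34 (m : ℕ) : (Fin (m + 3) → Bool) → ℝ := fun x =>
  if x 0 = x 1 then
    ((1:ℝ) / 2) ^ (m + 1) * (99 / 200 + if x 0 = XORtail x then 1 / 100 else 0)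
  else 0

/-- A distribution conditioned on `XORn x = b` (for distributions giving each value
probability 1/2). -/
noncomputable def condXOR {n : ℕ} (D : (Fin n → Bool) → ℝ) (b : Bool) : (Fin n → Bool) → ℝ :=
  fun x => if XORn x = b then 2 * D x else 0

/-!
A `corr` tree for `D0^k` against `D1^k` is a `bicorr` tree that reads only the left member of
each pair. Conversely, if a tree tells `D01^k` from `D10^k` with advantage `1/3`, then through
the hybrid `D00^k` it tells one of them from `D00^k` with advantage `1/6`. Those two differ in
only one member of each pair, so fixing the other member to a value that is good on average
leaves a tree on `k` samples that tells `D0^k` from `D1^k` with advantage `1/6`. Running it on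
`108` independent blocks and thresholding the number of acceptances halfway between the two
expectations raises the advantage to `1/3` by Chebyshev's inequality.
-/

namespace DTree

variable {α ι ι' β γ : Type}

theorem depth_node_child_le [Fintype α] (i : ι) (ch : α → DTree α ι β) (a : α) :
    (ch a).depth + 1 ≤ (node i ch).depth := by
  rw [depth, add_comm]
  exact Nat.add_le_add_left (Finset.le_sup (f := fun a => (ch a).depth) (mem_univ a)) 1

def subst (σ : ι → ι' ⊕ α) : DTree α ι β → DTree α ι' β
  | leaf b => leaf b
  | node i ch =>
    match σ i with
    | .inl j => node j fun a => (ch a).subst σ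
    | .inr a => (ch a).subst σ

theorem eval_subst (σ : ι → ι' ⊕ α) (t : DTree α ι β) (z : ι' → α) :
    (t.subst σ).eval z = t.eval fun i => (σ i).elim z id := by
  induction t with
  | leaf b => rfl
  | node i ch ih => cases h : σ i <;> simp [subst, eval, h, ih]

theorem depth_subst_le [Fintype α] (σ : ι → ι' ⊕ α) (t : DTree α ι β) :
    (t.subst σ).depth ≤ t.depth := by
  induction t with
  | leaf b => exact le_rfl
  | node i ch ih =>
    cases h : σ i with
    | inl j =>
      simp only [subst, h, depth]
      exact Nat.add_le_add_left (Finset.sup_mono_fun fun a _ => ih a) 1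
    | inr a =>
      simp only [subst, h]
      exact (ih a).trans (Nat.le_of_succ_le (depth_node_child_le i ch a))

def bind (t : DTree α ι β) (f : β → DTree α ι γ) : DTree α ι γ :=
  match t with
  | leaf b => f b
  | node i ch => node i fun a => (ch a).bind f

theorem eval_bind (t : DTree α ι β) (f : β → DTree α ι γ) (x : ι → α) :
    (t.bind f).eval x = (f (t.eval x)).eval x := by
  induction t with
  | leaf b => rfl
  | node i ch ih => simp [bind, eval, ih]

theorem depth_bind_le [Fintype α] (t : DTree α ι β) (f : β → DTree α ι γ) {d : ℕ}
    (hf : ∀ b, (f b).depth ≤ d) : (t.bind f).depth ≤ t.depth + d := by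
  induction t with
  | leaf b => simpa [bind, depth] using hf b
  | node i ch ih =>
    simp only [bind, depth, add_assoc]
    refine Nat.add_le_add_left (Finset.sup_le fun a _ => (ih a).trans ?_) 1
    exact Nat.add_le_add_right (Finset.le_sup (f := fun a => (ch a).depth) (mem_univ a)) d

def seq : {R : ℕ} → (Fin R → DTree α ι β) → ((Fin R → β) → γ) → DTree α ι γ
  | 0, _, g => leaf (g Fin.elim0)
  | _ + 1, ts, g => (ts 0).bind fun b => seq (Fin.tail ts) fun v => g (Fin.cons b v)

theorem eval_seq {R : ℕ} (ts : Fin R → DTree α ι β) (g : (Fin R → β) → γ) (x : ι → α) :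
    (seq ts g).eval x = g fun r => (ts r).eval x := by
  induction R with
  | zero => exact congrArg g (funext fun r => r.elim0)
  | succ R ih =>
    rw [seq, eval_bind, ih]
    exact congrArg g (Fin.cons_self_tail fun r => (ts r).eval x)

theorem depth_seq_le [Fintype α] {R d : ℕ} (ts : Fin R → DTree α ι β) (g : (Fin R → β) → γ)
    (hts : ∀ r, (ts r).depth ≤ d) : (seq ts g).depth ≤ R * d := by
  induction R with
  | zero => simp [seq, depth]
  | succ R ih =>
    rw [seq]
    calc _ ≤ (ts 0).depth + R * d := depth_bind_le _ _ fun b => ih _ _ fun r => hts r.succ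
      _ ≤ (R + 1) * d := by nlinarith [hts 0]

end DTree

section FiniteProbability

variable {ω ω' : Type} [Fintype ω] [Fintype ω']

theorem prS_mono {D : ω → ℝ} (hD : ∀ x, 0 ≤ D x) {A B : Set ω} (hAB : A ⊆ B) :
    prS D A ≤ prS D B :=
  Finset.sum_le_sum fun x _ => Set.indicator_le_indicator_of_subset hAB hD x

theorem prS_compl {D : ω → ℝ} (hD : ∑ x, D x = 1) (A : Set ω) : prS D Aᶜ = 1 - prS D A := by
  unfold prS
  rw [Set.indicator_compl, ← hD, ← Finset.sum_sub_distrib]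
  rfl

theorem prS_preimage_equiv (e : ω ≃ ω') (D : ω → ℝ) (A : Set ω') :
    prS D (e ⁻¹' A) = prS (D ∘ e.symm) A := by
  unfold prS
  rw [← e.sum_comp]
  refine Finset.sum_congr rfl fun x _ => ?_
  simp only [Set.indicator, Function.comp_apply, Equiv.symm_apply_apply]
  rfl

theorem prS_mul_eq_sum_left (μ : ω → ℝ) (ν : ω' → ℝ) (A : Set (ω × ω')) :
    prS (fun p => μ p.1 * ν p.2) A = ∑ a, μ a * prS ν {b | (a, b) ∈ A} := by
  simp only [prS, Fintype.sum_prod_type, Finset.mul_sum]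
  refine Finset.sum_congr rfl fun a _ => Finset.sum_congr rfl fun b _ => ?_
  by_cases h : (a, b) ∈ A <;> simp [h]

theorem prS_mul_eq_sum_right (μ : ω → ℝ) (ν : ω' → ℝ) (A : Set (ω × ω')) :
    prS (fun p => μ p.1 * ν p.2) A = ∑ b, ν b * prS μ {a | (a, b) ∈ A} := by
  simp only [prS, Fintype.sum_prod_type_right, Finset.mul_sum]
  refine Finset.sum_congr rfl fun b _ => Finset.sum_congr rfl fun a _ => ?_
  by_cases h : (a, b) ∈ A <;> simp [h, mul_comm]

theorem prS_mul_fst_preimage {μ : ω → ℝ} {ν : ω' → ℝ} (hν : ∑ b, ν b = 1) (A : Set ω) :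
    prS (fun p => μ p.1 * ν p.2) (Prod.fst ⁻¹' A) = prS μ A := by
  rw [prS_mul_eq_sum_left]
  refine Finset.sum_congr rfl fun a _ => ?_
  by_cases h : a ∈ A <;> simp [h, prS, hν]

theorem exists_le_of_le_sum_mul {w : ω → ℝ} (hw : ∀ x, 0 ≤ w x) (hw1 : ∑ x, w x = 1)
    {g : ω → ℝ} {c : ℝ} (h : c ≤ ∑ x, w x * g x) : ∃ x, c ≤ g x := by
  have : Nonempty ω := by
    by_contra hω
    simp [not_nonempty_iff.mp hω] at hw1
  obtain ⟨x, hx⟩ := Finite.exists_max g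
  refine ⟨x, h.trans ?_⟩
  calc ∑ y, w y * g y ≤ ∑ y, w y * g x :=
        Finset.sum_le_sum fun y _ => mul_le_mul_of_nonneg_left (hx y) (hw y)
    _ = g x := by rw [← Finset.sum_mul, hw1, one_mul]

theorem prS_le_abs_le {w : ω → ℝ} (hw : ∀ x, 0 ≤ w x) (f : ω → ℝ) {t : ℝ} (ht : 0 < t) :
    prS w {x | t ≤ |f x|} ≤ (∑ x, w x * f x ^ 2) / t ^ 2 := by
  rw [prS, Finset.sum_div]
  refine Finset.sum_le_sum fun x _ => ?_
  rw [le_div_iff₀ (by positivity), Set.indicator_apply]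
  split_ifs with hx
  · exact mul_le_mul_of_nonneg_left (by simpa using pow_le_pow_left₀ ht.le hx 2) (hw x)
  · simpa using mul_nonneg (hw x) (sq_nonneg (f x))

end FiniteProbability

section IndependentSums

variable {γ : Type} [Fintype γ] {μ : γ → ℝ}

theorem sum_fin_succ_pi {R : ℕ} (F : (Fin (R + 1) → γ) → ℝ) :
    ∑ v, F v = ∑ a, ∑ w : Fin R → γ, F (Fin.cons a w) := by
  rw [← (Fin.consEquiv fun _ => γ).sum_comp, Fintype.sum_prod_type]
  rfl

theorem sum_pi_prod_eq_one (hμ : ∑ x, μ x = 1) (R : ℕ) :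
    ∑ v : Fin R → γ, ∏ r, μ (v r) = 1 := by
  rw [← Fintype.sum_pow, hμ, one_pow]

theorem sum_pi_prod_mul_sum_eq_zero (hμ : ∑ x, μ x = 1) {Y : γ → ℝ}
    (hY : ∑ x, μ x * Y x = 0) (R : ℕ) :
    ∑ v : Fin R → γ, (∏ r, μ (v r)) * ∑ r, Y (v r) = 0 := by
  induction R with
  | zero => simp
  | succ R ih =>
    have hsplit : ∀ a (w : Fin R → γ), (μ a * ∏ r, μ (w r)) * (Y a + ∑ r, Y (w r))
        = μ a * Y a * ∏ r, μ (w r) + μ a * ((∏ r, μ (w r)) * ∑ r, Y (w r)) := fun a w => by ring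
    simp only [sum_fin_succ_pi, Fin.prod_univ_succ, Fin.sum_univ_succ, Fin.cons_zero,
      Fin.cons_succ, hsplit, Finset.sum_add_distrib, ← Finset.mul_sum, ih,
      sum_pi_prod_eq_one hμ, mul_one, mul_zero, hY, Finset.sum_const_zero, add_zero]

theorem sum_pi_prod_mul_sum_sq (hμ : ∑ x, μ x = 1) {Y : γ → ℝ}
    (hY : ∑ x, μ x * Y x = 0) (R : ℕ) :
    ∑ v : Fin R → γ, (∏ r, μ (v r)) * (∑ r, Y (v r)) ^ 2 = R * ∑ x, μ x * Y x ^ 2 := by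
  induction R with
  | zero => simp
  | succ R ih =>
    have hsplit : ∀ a (w : Fin R → γ), (μ a * ∏ r, μ (w r)) * (Y a + ∑ r, Y (w r)) ^ 2
        = μ a * Y a ^ 2 * ∏ r, μ (w r) + 2 * (μ a * Y a) * ((∏ r, μ (w r)) * ∑ r, Y (w r))
          + μ a * ((∏ r, μ (w r)) * (∑ r, Y (w r)) ^ 2) := fun a w => by ring
    simp only [sum_fin_succ_pi, Fin.prod_univ_succ, Fin.sum_univ_succ, Fin.cons_zero,
      Fin.cons_succ, hsplit, Finset.sum_add_distrib, ← Finset.mul_sum, ih,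
      sum_pi_prod_mul_sum_eq_zero hμ hY, sum_pi_prod_eq_one hμ, mul_one, mul_zero,
      Finset.sum_const_zero, add_zero]
    rw [← Finset.sum_mul, hμ]
    push_cast
    ring

theorem sum_mul_sub_sq_le (hμ0 : ∀ x, 0 ≤ μ x) (hμ : ∑ x, μ x = 1) {X : γ → ℝ}
    (hX : ∀ x, X x ∈ Set.Icc (0 : ℝ) 1) :
    ∑ x, μ x * (X x - ∑ y, μ y * X y) ^ 2 ≤ 1 / 4 := by
  set m := ∑ y, μ y * X y
  have hpt : ∀ x, μ x * (X x - m) ^ 2 ≤ μ x * X x - 2 * m * (μ x * X x) + m ^ 2 * μ x := by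
    intro x
    have : X x ^ 2 ≤ X x := by nlinarith [(hX x).1, (hX x).2]
    nlinarith [hμ0 x]
  calc ∑ x, μ x * (X x - m) ^ 2
      ≤ ∑ x, (μ x * X x - 2 * m * (μ x * X x) + m ^ 2 * μ x) := Finset.sum_le_sum fun x _ => hpt x
    _ = m - m ^ 2 := by
      rw [Finset.sum_add_distrib, Finset.sum_sub_distrib, ← Finset.mul_sum, ← Finset.mul_sum, hμ]
      ring
    _ ≤ 1 / 4 := by nlinarith [sq_nonneg (2 * m - 1)]

theorem prS_pi_le_abs_sum_sub_le (hμ0 : ∀ x, 0 ≤ μ x) (hμ : ∑ x, μ x = 1) {X : γ → ℝ}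
    (hX : ∀ x, X x ∈ Set.Icc (0 : ℝ) 1) (R : ℕ) {t : ℝ} (ht : 0 < t) :
    prS (fun v : Fin R → γ => ∏ r, μ (v r))
        {v | t ≤ |∑ r, X (v r) - R * ∑ x, μ x * X x|} ≤ R / (4 * t ^ 2) := by
  set m := ∑ x, μ x * X x
  have hY : ∑ x, μ x * (X x - m) = 0 := by
    simp only [mul_sub, Finset.sum_sub_distrib, ← Finset.sum_mul, hμ, one_mul, m, sub_self]
  have hcenter : ∀ v : Fin R → γ, ∑ r, X (v r) - R * m = ∑ r, (X (v r) - m) := by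
    intro v
    simp [Finset.sum_sub_distrib]
  simp only [hcenter]
  calc _ ≤ (∑ v : Fin R → γ, (∏ r, μ (v r)) * (∑ r, (X (v r) - m)) ^ 2) / t ^ 2 :=
        prS_le_abs_le (fun v => Finset.prod_nonneg fun r _ => hμ0 (v r)) _ ht
    _ ≤ R * (1 / 4) / t ^ 2 := by
      rw [sum_pi_prod_mul_sum_sq hμ hY]
      gcongr
      exact sum_mul_sub_sq_le hμ0 hμ hX
    _ = R / (4 * t ^ 2) := by ring

end IndependentSums

section Samples

variable {n k : ℕ}

theorem prodD_nonneg {D : (Fin n → Bool) → ℝ} (hD : ∀ z, 0 ≤ D z)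
    (x : (Fin k × Fin n) → Bool) : 0 ≤ prodD D x :=
  Finset.prod_nonneg fun _ _ => hD _

theorem prodD_pi_nonneg {R : ℕ} {D : (Fin n → Bool) → ℝ} (hD : ∀ z, 0 ≤ D z)
    (v : Fin R → (Fin k × Fin n) → Bool) : 0 ≤ ∏ r, prodD D (v r) :=
  Finset.prod_nonneg fun r _ => prodD_nonneg hD (v r)

theorem sum_prodD {D : (Fin n → Bool) → ℝ} (hD : ∑ z, D z = 1) :
    ∑ x : (Fin k × Fin n) → Bool, prodD D x = 1 := by
  rw [← (Equiv.curry _ _ _).symm.sum_comp]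
  exact sum_pi_prod_eq_one hD k

/-- `blocks x r p = x (finProdFinEquiv (r, p.1), p.2)`: block `r` holds the samples
`r * k, …, r * k + k - 1`. -/
def blocks {R : ℕ} {α : Type} : ((Fin (R * k) × Fin n) → α) ≃ (Fin R → (Fin k × Fin n) → α) :=
  (Equiv.arrowCongr ((finProdFinEquiv.symm.prodCongr (Equiv.refl _)).trans
    (Equiv.prodAssoc _ _ _)) (Equiv.refl α)).trans (Equiv.curry _ _ _)

theorem prodD_eq_prod_blocks {R : ℕ} (D : (Fin n → Bool) → ℝ) (x : (Fin (R * k) × Fin n) → Bool) :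
    prodD D x = ∏ r, prodD D (blocks x r) := by
  unfold prodD
  rw [← finProdFinEquiv.prod_comp, Fintype.prod_prod_type]
  rfl

theorem prS_prodD_preimage_blocks {R : ℕ} (D : (Fin n → Bool) → ℝ)
    (A : Set (Fin R → (Fin k × Fin n) → Bool)) :
    prS (prodD D) (blocks ⁻¹' A) = prS (fun v => ∏ r, prodD D (v r)) A := by
  rw [prS_preimage_equiv]
  congr 1
  funext v
  simp [prodD_eq_prod_blocks]

def halves {α : Type} :
    ((Fin k × Fin 2 × Fin n) → α) ≃ ((Fin k × Fin n) → α) × ((Fin k × Fin n) → α) where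
  toFun x := (fun p => x (p.1, 0, p.2), fun p => x (p.1, 1, p.2))
  invFun lr q := if q.2.1 = 0 then lr.1 (q.1, q.2.2) else lr.2 (q.1, q.2.2)
  left_inv x := by
    funext ⟨j, s, i⟩
    fin_cases s <;> rfl
  right_inv lr := by
    ext p <;> simp

theorem comp_halves_symm {α β : Type} (g : α → β) (l r : (Fin k × Fin n) → α) :
    g ∘ halves.symm (l, r) = halves.symm (g ∘ l, g ∘ r) := by
  funext q
  simp only [halves, Equiv.coe_fn_symm_mk, Function.comp_apply]
  split_ifs <;> rfl

theorem prodD2_eq (Da Db : (Fin n → Bool) → ℝ) (x : (Fin k × Fin 2 × Fin n) → Bool) :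
    prodD2 Da Db x = prodD Da (halves x).1 * prodD Db (halves x).2 :=
  Finset.prod_mul_distrib

theorem prS_prodD2_preimage_halves (Da Db : (Fin n → Bool) → ℝ)
    (A : Set (((Fin k × Fin n) → Bool) × ((Fin k × Fin n) → Bool))) :
    prS (prodD2 Da Db) (halves ⁻¹' A) = prS (fun lr => prodD Da lr.1 * prodD Db lr.2) A := by
  rw [prS_preimage_equiv]
  congr 1
  funext lr
  rw [Function.comp_apply, prodD2_eq, Equiv.apply_symm_apply]

end Samples

noncomputable def acceptProb {α ι : Type} [Fintype (ι → α)] (P : (ι → α) → ℝ)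
    (T : DTree α ι Bool) : ℝ :=
  prS P {x | T.eval x = true}

theorem setOf_eval_eq_false {α ι : Type} (T : DTree α ι Bool) :
    {x | T.eval x = false} = {x | T.eval x = true}ᶜ := by
  ext x
  simp

section Acceptance

variable {α ι : Type} [Fintype (ι → α)]

theorem le_success_iff {P0 P1 : (ι → α) → ℝ} (hP0 : ∑ x, P0 x = 1) (T : DTree α ι Bool)
    (ε : ℝ) :
    1 - ε ≤ (prS P0 {x | T.eval x = false} + prS P1 {x | T.eval x = true}) / 2 ↔
      1 - 2 * ε ≤ acceptProb P1 T - acceptProb P0 T := by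
  rw [setOf_eval_eq_false, prS_compl hP0, acceptProb, acceptProb]
  constructor <;> intro h <;> linarith

theorem acceptProb_bind_not {P : (ι → α) → ℝ} (hP : ∑ x, P x = 1) (T : DTree α ι Bool) :
    acceptProb P (T.bind fun b => .leaf !b) = 1 - acceptProb P T := by
  have hset : {x | (T.bind fun b => .leaf !b).eval x = true} = {x | T.eval x = true}ᶜ := by
    ext x
    simp [DTree.eval_bind, DTree.eval]
  rw [acceptProb, hset, prS_compl hP, acceptProb]

theorem acceptProb_eq_sum_mul_ite (P : (ι → α) → ℝ) (T : DTree α ι Bool) :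
    acceptProb P T = ∑ x, P x * if T.eval x = true then 1 else 0 := by
  refine Finset.sum_congr rfl fun x _ => ?_
  by_cases h : T.eval x = true <;> simp [Set.indicator, h]

end Acceptance

section PairedSamples

variable {n k : ℕ}

theorem eval_subst_fix_right (T : DTree Bool (Fin k × Fin 2 × Fin n) Bool)
    (l r : (Fin k × Fin n) → Bool) :
    (T.subst (halves.symm (Sum.inl, Sum.inr ∘ r))).eval l = T.eval (halves.symm (l, r)) := by
  rw [DTree.eval_subst]
  exact congrArg T.eval (comp_halves_symm (Sum.elim l id) _ _)

theorem eval_subst_fix_left (T : DTree Bool (Fin k × Fin 2 × Fin n) Bool)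
    (l r : (Fin k × Fin n) → Bool) :
    (T.subst (halves.symm (Sum.inr ∘ l, Sum.inl))).eval r = T.eval (halves.symm (l, r)) := by
  rw [DTree.eval_subst]
  exact congrArg T.eval (comp_halves_symm (Sum.elim r id) _ _)

theorem setOf_eval_eq_preimage_halves (T : DTree Bool (Fin k × Fin 2 × Fin n) Bool) :
    {x | T.eval x = true} = halves ⁻¹' {lr | T.eval (halves.symm lr) = true} := by
  ext x
  simp

theorem acceptProb_prodD2_eq_sum_right (T : DTree Bool (Fin k × Fin 2 × Fin n) Bool)
    (Da Db : (Fin n → Bool) → ℝ) :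
    acceptProb (prodD2 Da Db) T = ∑ r, prodD Db r *
      acceptProb (prodD Da) (T.subst (halves.symm (Sum.inl, Sum.inr ∘ r))) := by
  rw [acceptProb, setOf_eval_eq_preimage_halves, prS_prodD2_preimage_halves,
    prS_mul_eq_sum_right]
  simp only [acceptProb, eval_subst_fix_right, Set.mem_ofPred_eq]

theorem acceptProb_prodD2_eq_sum_left (T : DTree Bool (Fin k × Fin 2 × Fin n) Bool)
    (Da Db : (Fin n → Bool) → ℝ) :
    acceptProb (prodD2 Da Db) T = ∑ l, prodD Da l *
      acceptProb (prodD Db) (T.subst (halves.symm (Sum.inr ∘ l, Sum.inl))) := by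
  rw [acceptProb, setOf_eval_eq_preimage_halves, prS_prodD2_preimage_halves,
    prS_mul_eq_sum_left]
  simp only [acceptProb, eval_subst_fix_left, Set.mem_ofPred_eq]

theorem prS_prodD2_fst_mem {Da Db : (Fin n → Bool) → ℝ} (hDb : ∑ z, Db z = 1)
    (A : Set ((Fin k × Fin n) → Bool)) :
    prS (prodD2 Da Db) {x | (halves x).1 ∈ A} = prS (prodD Da) A :=
  (prS_prodD2_preimage_halves Da Db (Prod.fst ⁻¹' A)).trans
    (prS_mul_fst_preimage (sum_prodD hDb) A)

theorem sum_prodD2 {D0 D1 : (Fin n → Bool) → ℝ} (hD0 : ∑ z, D0 z = 1) (hD1 : ∑ z, D1 z = 1) :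
    ∑ x : (Fin k × Fin 2 × Fin n) → Bool, prodD2 D0 D1 x = 1 := by
  simpa [prS, sum_prodD hD0] using prS_prodD2_fst_mem (k := k) (Da := D0) hD1 Set.univ

end PairedSamples

section Hybrid

variable {n k : ℕ} {D0 D1 : (Fin n → Bool) → ℝ}

theorem exists_tree_of_pair_tree (hD0 : IsDist D0) (hD1 : ∑ z, D1 z = 1)
    (T : DTree Bool (Fin k × Fin 2 × Fin n) Bool) {δ : ℝ}
    (hT : δ ≤ acceptProb (prodD2 D1 D0) T - acceptProb (prodD2 D0 D1) T) :
    ∃ S : DTree Bool (Fin k × Fin n) Bool, S.depth ≤ T.depth ∧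
      δ / 2 ≤ acceptProb (prodD D1) S - acceptProb (prodD D0) S := by
  by_cases hright : δ / 2 ≤ acceptProb (prodD2 D1 D0) T - acceptProb (prodD2 D0 D0) T
  · rw [acceptProb_prodD2_eq_sum_right, acceptProb_prodD2_eq_sum_right,
      ← Finset.sum_sub_distrib] at hright
    simp only [← mul_sub] at hright
    obtain ⟨r, hr⟩ := exists_le_of_le_sum_mul (prodD_nonneg hD0.1) (sum_prodD hD0.2) hright
    exact ⟨_, DTree.depth_subst_le _ _, hr⟩
  · have hleft : δ / 2 ≤ acceptProb (prodD2 D0 D0) T - acceptProb (prodD2 D0 D1) T := by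
      linarith
    rw [acceptProb_prodD2_eq_sum_left, acceptProb_prodD2_eq_sum_left,
      ← Finset.sum_sub_distrib] at hleft
    simp only [← mul_sub] at hleft
    obtain ⟨l, hl⟩ := exists_le_of_le_sum_mul (prodD_nonneg hD0.1) (sum_prodD hD0.2) hleft
    refine ⟨(T.subst (halves.symm (Sum.inr ∘ l, Sum.inl))).bind fun b => .leaf !b, ?_, ?_⟩
    · exact (DTree.depth_bind_le _ _ (d := 0) fun _ => le_rfl).trans (DTree.depth_subst_le _ _)
    · rw [acceptProb_bind_not (sum_prodD hD1), acceptProb_bind_not (sum_prodD hD0.2)]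
      linarith

end Hybrid

section Amplification

variable {n k R : ℕ}

noncomputable def repeatThreshold (S : DTree Bool (Fin k × Fin n) Bool) (R : ℕ) (θ : ℝ) :
    DTree Bool (Fin (R * k) × Fin n) Bool :=
  DTree.seq (fun r : Fin R => S.subst fun p => .inl (finProdFinEquiv (r, p.1), p.2))
    fun b => decide (θ ≤ ∑ r, if b r then (1 : ℝ) else 0)

theorem depth_repeatThreshold_le (S : DTree Bool (Fin k × Fin n) Bool) (θ : ℝ) :
    (repeatThreshold S R θ).depth ≤ R * S.depth :=
  DTree.depth_seq_le _ _ fun _ => DTree.depth_subst_le _ _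

theorem acceptProb_repeatThreshold (D : (Fin n → Bool) → ℝ) (S : DTree Bool (Fin k × Fin n) Bool)
    (θ : ℝ) :
    acceptProb (prodD D) (repeatThreshold S R θ) =
      prS (fun v : Fin R → (Fin k × Fin n) → Bool => ∏ r, prodD D (v r))
        {v | θ ≤ ∑ r, if S.eval (v r) = true then 1 else 0} := by
  rw [acceptProb, ← prS_prodD_preimage_blocks]
  congr 1
  ext x
  simp only [Set.mem_ofPred_eq, Set.mem_preimage, repeatThreshold, DTree.eval_seq,
    DTree.eval_subst, decide_eq_true_iff]
  rfl

theorem prS_abs_acceptCount_sub_le {D : (Fin n → Bool) → ℝ} (hD : IsDist D)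
    (S : DTree Bool (Fin k × Fin n) Bool) {t : ℝ} (ht : 0 < t) :
    prS (fun v : Fin R → (Fin k × Fin n) → Bool => ∏ r, prodD D (v r))
      {v | t ≤ |∑ r, (if S.eval (v r) = true then 1 else 0) - R * acceptProb (prodD D) S|} ≤
        R / (4 * t ^ 2) := by
  rw [acceptProb_eq_sum_mul_ite]
  exact prS_pi_le_abs_sum_sub_le (X := fun z => if S.eval z = true then 1 else 0)
    (prodD_nonneg hD.1) (sum_prodD hD.2)
    (fun z => by by_cases h : S.eval z = true <;> simp [h]) R ht

theorem acceptProb_repeatThreshold_le {D : (Fin n → Bool) → ℝ} (hD : IsDist D)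
    (S : DTree Bool (Fin k × Fin n) Bool) {t θ : ℝ} (ht : 0 < t)
    (hθ : R * acceptProb (prodD D) S + t ≤ θ) :
    acceptProb (prodD D) (repeatThreshold S R θ) ≤ R / (4 * t ^ 2) := by
  rw [acceptProb_repeatThreshold]
  refine (prS_mono (prodD_pi_nonneg hD.1) fun v hv => ?_).trans
    (prS_abs_acceptCount_sub_le hD S ht)
  simp only [Set.mem_ofPred_eq] at hv ⊢
  exact le_abs.2 (Or.inl (by linarith))

theorem one_sub_acceptProb_repeatThreshold_le {D : (Fin n → Bool) → ℝ} (hD : IsDist D)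
    (S : DTree Bool (Fin k × Fin n) Bool) {t θ : ℝ} (ht : 0 < t)
    (hθ : θ + t ≤ R * acceptProb (prodD D) S) :
    1 - acceptProb (prodD D) (repeatThreshold S R θ) ≤ R / (4 * t ^ 2) := by
  rw [acceptProb_repeatThreshold, ← prS_compl (sum_pi_prod_eq_one (sum_prodD hD.2) R)]
  refine (prS_mono (prodD_pi_nonneg hD.1) fun v hv => ?_).trans
    (prS_abs_acceptCount_sub_le hD S ht)
  simp only [Set.mem_compl_iff, Set.mem_ofPred_eq, not_le] at hv ⊢
  exact le_abs.2 (Or.inr (by linarith))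

theorem exists_amplified_tree {D0 D1 : (Fin n → Bool) → ℝ} (hD0 : IsDist D0) (hD1 : IsDist D1)
    (S : DTree Bool (Fin k × Fin n) Bool) {γ : ℝ} (hγ : 0 < γ)
    (hS : γ ≤ acceptProb (prodD D1) S - acceptProb (prodD D0) S) (hR : 0 < R) :
    ∃ U : DTree Bool (Fin (R * k) × Fin n) Bool, U.depth ≤ R * S.depth ∧
      1 - 2 / (R * γ ^ 2) ≤ acceptProb (prodD D1) U - acceptProb (prodD D0) U := by
  obtain ⟨θ, hθ⟩ : ∃ θ : ℝ, θ = R * (acceptProb (prodD D0) S + acceptProb (prodD D1) S) / 2 :=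
    ⟨_, rfl⟩
  have hRpos : (0 : ℝ) < R := Nat.cast_pos.2 hR
  have ht : 0 < R * γ / 2 := by positivity
  have hgap : R * γ ≤ R * (acceptProb (prodD D1) S - acceptProb (prodD D0) S) :=
    mul_le_mul_of_nonneg_left hS hRpos.le
  have h0 := acceptProb_repeatThreshold_le (R := R) hD0 S ht (θ := θ) (by linarith)
  have h1 := one_sub_acceptProb_repeatThreshold_le (R := R) hD1 S ht (θ := θ) (by linarith)
  have herr : (R : ℝ) / (4 * (R * γ / 2) ^ 2) = 1 / (R * γ ^ 2) := by
    field_simp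
    ring
  refine ⟨repeatThreshold S R θ, depth_repeatThreshold_le S θ, ?_⟩
  rw [herr] at h0 h1
  linarith [show 2 / (R * γ ^ 2) = 2 * (1 / (R * γ ^ 2)) by ring]

end Amplification

section Witnesses

variable {n : ℕ} {D0 D1 : (Fin n → Bool) → ℝ}

theorem bicorr_witness_of_corr_witness (hD0 : ∑ z, D0 z = 1) (hD1 : ∑ z, D1 z = 1)
    {ε : ℝ} {q : ℕ}
    (h : ∃ k, 0 < k ∧ ∃ T : DTree Bool (Fin k × Fin n) Bool, T.depth ≤ q ∧
      1 - ε ≤ (prS (prodD D0) {x | T.eval x = false} + prS (prodD D1) {x | T.eval x = true}) / 2) :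
    ∃ k, 0 < k ∧ ∃ T : DTree Bool (Fin k × Fin 2 × Fin n) Bool, T.depth ≤ q ∧
      1 - ε ≤ (prS (prodD2 D0 D1) {x | T.eval x = false} +
        prS (prodD2 D1 D0) {x | T.eval x = true}) / 2 := by
  obtain ⟨k, hk, T, hTq, hT⟩ := h
  let T' : DTree Bool (Fin k × Fin 2 × Fin n) Bool := T.subst fun p => .inl (p.1, 0, p.2)
  have hT' : ∀ {Da Db : (Fin n → Bool) → ℝ}, ∑ z, Db z = 1 → ∀ b,
      prS (prodD2 Da Db) {x | T'.eval x = b} = prS (prodD Da) {l | T.eval l = b} := by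
    intro Da Db hDb b
    rw [← prS_prodD2_fst_mem hDb]
    congr 1
    ext x
    simp only [T', Set.mem_ofPred_eq, DTree.eval_subst]
    rfl
  refine ⟨k, hk, T', (DTree.depth_subst_le _ _).trans hTq, ?_⟩
  rwa [hT' hD1, hT' hD0]

theorem corr_witness_of_bicorr_witness (hD0 : IsDist D0) (hD1 : IsDist D1) {q : ℕ}
    (h : ∃ k, 0 < k ∧ ∃ T : DTree Bool (Fin k × Fin 2 × Fin n) Bool, T.depth ≤ q ∧
      1 - 1 / 3 ≤ (prS (prodD2 D0 D1) {x | T.eval x = false} +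
        prS (prodD2 D1 D0) {x | T.eval x = true}) / 2) :
    ∃ k, 0 < k ∧ ∃ U : DTree Bool (Fin k × Fin n) Bool, U.depth ≤ 108 * q ∧
      1 - 1 / 3 ≤ (prS (prodD D0) {x | U.eval x = false} +
        prS (prodD D1) {x | U.eval x = true}) / 2 := by
  obtain ⟨k, hk, T, hTq, hT⟩ := h
  rw [le_success_iff (sum_prodD2 hD0.2 hD1.2)] at hT
  obtain ⟨S, hSd, hS⟩ := exists_tree_of_pair_tree hD0 hD1.2 T hT
  -- advantage `1/6` on `108` blocks: `1 - 2 / (108 * (1/6) ^ 2) = 1/3`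
  obtain ⟨U, hUd, hU⟩ := exists_amplified_tree hD0 hD1 S (by norm_num) hS (R := 108) (by norm_num)
  refine ⟨108 * k, by positivity, U, hUd.trans (Nat.mul_le_mul_left 108 (hSd.trans hTq)), ?_⟩
  rw [le_success_iff (sum_prodD hD0.2)]
  norm_num at hU ⊢
  exact hU

end Witnesses

theorem sInf_le_of_forall_map_mem {A B : Set ℕ} (g : ℕ → ℕ) (hBA : ∀ q ∈ B, g q ∈ A)
    (hAB : A.Nonempty → B.Nonempty) : sInf A ≤ g (sInf B) := by
  rcases A.eq_empty_or_nonempty with hA | hA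
  · simp [hA]
  · exact Nat.sInf_le (hBA _ (Nat.sInf_mem (hAB hA)))

/-- `bicorr_{1/3}(f,D) ≤ corr_{1/3}(f,D) ≤ C · bicorr_{1/3}(f,D)` for a
universal constant `C > 0`. -/
theorem corr_eq_bicorr :
    ∃ C : ℝ, 0 < C ∧
      ∀ (n : ℕ) (f : (Fin n → Bool) → Option Bool) (D0 D1 : (Fin n → Bool) → ℝ),
        BalancedDist f D0 D1 →
          bicorrC (1/3) D0 D1 ≤ corrC (1/3) D0 D1 ∧
          (corrC (1/3) D0 D1 : ℝ) ≤ C * (bicorrC (1/3) D0 D1 : ℝ) := by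
  refine ⟨108, by norm_num, fun n f D0 D1 hD => ?_⟩
  obtain ⟨hD0, hD1, -, -⟩ := hD
  have toBicorr := fun q => bicorr_witness_of_corr_witness (q := q) (ε := 1 / 3) hD0.2 hD1.2
  have toCorr := fun q => corr_witness_of_bicorr_witness (q := q) hD0 hD1
  constructor
  · exact sInf_le_of_forall_map_mem id toBicorr fun ⟨q, hq⟩ => ⟨_, toCorr q hq⟩
  · exact_mod_cast sInf_le_of_forall_map_mem (108 * ·) toCorr fun ⟨q, hq⟩ => ⟨q, toBicorr q hq⟩
end

section
/- There is a universal constant C > 0 such that for every n ≥ 2 the following holds. Let XOR_n : {0,1}^n → {0,1} be the parity function and let D be the distribution on {0,1}^n which, with probability 99/100, outputs 0 followed by n−1 uniform random bits, and with probability 1/100 outputs 1 followed by one uniform random bit followed by 0^{n−2}. Then every deterministic decision tree of depth at most n−2 errs with probability greater than 1/3 in computing XOR_n on x ∼ D (so dt_{1/3}(XOR_n, D) ≥ n−1), while corr_{1/3}(XOR_n, D) ≤ C. -/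
open Finset

/-!
On the event `x 0 = false`, which carries mass `99/100` uniformly, `XOR_n` is the parity of the
`n - 1` free bits. A tree of depth `≤ n - 2` leaves one of them unread on every path, and flipping
an unread bit chosen as a function of the path alone is an involution that keeps the tree's answer
and flips the parity. So the tree is right on exactly half of this event, and the remaining mass
`1/100` cannot lift its success above `101/200`.

Under `D_b` a sample whose first bit is `1` has second bit `¬b`. Scanning 41 samples for such a
sample never errs under `D_0`, and errs under `D_1` only when all 41 samples start with `0`, which
happens with probability `(99/100)^41 ≤ 2/3`; the average error is therefore at most `1/3`.
-/

namespace DTree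

variable {α ι β : Type} [DecidableEq ι]

def queries : DTree α ι β → (ι → α) → Finset ι
  | .leaf _, _ => ∅
  | .node i ch, x => insert i ((ch (x i)).queries x)

theorem card_queries_le_depth [Fintype α] (T : DTree α ι β) (x : ι → α) :
    #(T.queries x) ≤ T.depth := by
  induction T with
  | leaf => simp [queries]
  | node i ch ih =>
    calc #(insert i ((ch (x i)).queries x)) ≤ #((ch (x i)).queries x) + 1 := card_insert_le _ _
      _ ≤ (ch (x i)).depth + 1 := by gcongr; exact ih _
      _ ≤ 1 + univ.sup fun a => (ch a).depth := by
        rw [add_comm]; gcongr; exact le_sup (f := fun a => (ch a).depth) (mem_univ _)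

theorem queries_eq_of_eqOn {T : DTree α ι β} {x y : ι → α}
    (h : ∀ i ∈ T.queries x, y i = x i) : T.queries y = T.queries x := by
  induction T with
  | leaf => rfl
  | node i ch ih =>
    simp only [queries, mem_insert, forall_eq_or_imp] at h ⊢
    rw [h.1, ih _ h.2]

theorem eval_eq_of_eqOn {T : DTree α ι β} {x y : ι → α}
    (h : ∀ i ∈ T.queries x, y i = x i) : T.eval y = T.eval x := by
  induction T with
  | leaf => rfl
  | node i ch ih =>
    simp only [queries, mem_insert, forall_eq_or_imp] at h
    simp only [eval, h.1, ih _ h.2]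

theorem exists_involutive_flip (T : DTree Bool ι β) {F : Finset ι} (hT : T.depth < #F) :
    ∃ σ : (ι → Bool) → ι → Bool, Function.Involutive σ ∧
      ∀ x, T.eval (σ x) = T.eval x ∧ ∃ i ∈ F, σ x = Function.update x i (!x i) := by
  have hF : F.Nonempty := card_pos.mp (by omega)
  have hpick (s : Finset ι) : ∃ i ∈ F, #s < #F → i ∉ s := by
    by_cases hs : #s < #F
    · obtain ⟨i, hiF, his⟩ := exists_mem_notMem_of_card_lt_card hs
      exact ⟨i, hiF, fun _ => his⟩
    · exact ⟨hF.choose, hF.choose_spec, fun h => absurd h hs⟩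
  choose pick hpickF hpick using hpick
  have hunread (x) : pick (T.queries x) ∉ T.queries x :=
    hpick _ ((card_queries_le_depth T x).trans_lt hT)
  have hagree (x) : ∀ i ∈ T.queries x,
      Function.update x (pick (T.queries x)) (!x (pick (T.queries x))) i = x i :=
    fun i hi => Function.update_of_ne (ne_of_mem_of_not_mem hi (hunread x)) _ _
  refine ⟨fun x => Function.update x (pick (T.queries x)) (!x (pick (T.queries x))),
    fun x => ?_, fun x => ⟨eval_eq_of_eqOn (hagree x), _, hpickF _, rfl⟩⟩
  simp only [queries_eq_of_eqOn (hagree x), Function.update_self, Bool.not_not,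
    Function.update_idem, Function.update_eq_self]

theorem card_filter_eval_eq_eq_card_filter_eval_ne (T : DTree Bool ι Bool) {F : Finset ι}
    (hT : T.depth < #F) {g : (ι → Bool) → Bool}
    (hg : ∀ x, ∀ i ∈ F, g (Function.update x i (!x i)) = !g x) {S : Finset (ι → Bool)}
    (hS : ∀ x ∈ S, ∀ i ∈ F, Function.update x i (!x i) ∈ S) :
    #{x ∈ S | T.eval x = g x} = #{x ∈ S | T.eval x ≠ g x} := by
  obtain ⟨σ, hσ, hσT⟩ := T.exists_involutive_flip hT
  have hmaps (x) (hx : x ∈ S) : σ x ∈ S ∧ (T.eval (σ x) = g (σ x) ↔ T.eval x ≠ g x) := by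
    obtain ⟨heval, i, hi, hσx⟩ := hσT x
    rw [heval, hσx, hg x i hi]
    exact ⟨hS x hx i hi, by cases T.eval x <;> cases g x <;> decide⟩
  refine card_nbij' σ σ (fun x hx => ?_) (fun x hx => ?_) (fun x _ => hσ x) (fun x _ => hσ x)
  · simp only [mem_coe, mem_filter] at hx ⊢
    exact ⟨(hmaps x hx.1).1, fun h => (hmaps x hx.1).2.mp h hx.2⟩
  · simp only [mem_coe, mem_filter] at hx ⊢
    exact ⟨(hmaps x hx.1).1, (hmaps x hx.1).2.mpr hx.2⟩

end DTree

section prS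

variable {γ : Type} [Fintype γ]

theorem prS_setOf (D : γ → ℝ) (p : γ → Prop) [DecidablePred p] :
    prS D {x | p x} = ∑ x with p x, D x := by
  rw [prS, sum_filter]
  exact sum_congr rfl fun x _ => by simp [Set.indicator_apply]

theorem prS_congr {D : γ → ℝ} {S S' : Set γ} (h : ∀ x, D x ≠ 0 → (x ∈ S ↔ x ∈ S')) :
    prS D S = prS D S' := by
  classical
  unfold prS
  refine sum_congr rfl fun x _ => ?_
  by_cases hx : D x = 0
  · simp [Set.indicator_apply, hx]
  · simp [Set.indicator_apply, h x hx]

theorem prS_compl_s16 (D : γ → ℝ) (S : Set γ) : prS D Sᶜ = prS D Set.univ - prS D S := by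
  rw [eq_sub_iff_add_eq, prS, prS, prS, ← sum_add_distrib]
  exact sum_congr rfl fun x _ => by rw [add_comm, Set.indicator_self_add_compl_apply,
    Set.indicator_univ]

end prS

theorem prS_prodD_pi {α : Type} [Fintype α] {n : ℕ} (k : ℕ) (D : (Fin n → α) → ℝ)
    (S : Set (Fin n → α)) :
    prS (prodD D) {x : Fin k × Fin n → α | ∀ j, (fun i => x (j, i)) ∈ S} = prS D S ^ k := by
  calc prS (prodD D) {x : Fin k × Fin n → α | ∀ j, (fun i => x (j, i)) ∈ S}
      = ∑ x : Fin k × Fin n → α, ∏ j, S.indicator D fun i => x (j, i) := by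
        classical
        unfold prS
        refine sum_congr rfl fun x _ => ?_
        simp only [prodD, Set.indicator_apply, Set.mem_ofPred_eq, prod_ite_zero, mem_univ,
          true_imp_iff]
    _ = ∑ g : Fin k → Fin n → α, ∏ j, S.indicator D (g j) :=
        (Equiv.curry (Fin k) (Fin n) α).sum_comp fun g => ∏ j, S.indicator D (g j)
    _ = prS D S ^ k := by
        rw [← Fintype.prod_sum, prod_const, card_univ, Fintype.card_fin, prS]

theorem prS_prodD_univ {α : Type} [Fintype α] {n : ℕ} (k : ℕ) (D : (Fin n → α) → ℝ) :
    prS (prodD (k := k) D) Set.univ = prS D Set.univ ^ k := by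
  simpa using prS_prodD_pi k D Set.univ

theorem XORn_update_not {n : ℕ} (x : Fin n → Bool) (i : Fin n) :
    XORn (Function.update x i (!x i)) = !XORn x := by
  set A := univ.filter fun j => x j = true
  have hA : (univ.filter fun j => Function.update x i (!x i) j = true)
      = if x i then A.erase i else insert i A := by
    ext j
    by_cases hj : j = i
    · subst hj; cases x j <;> simp [A]
    · cases x i <;> simp [A, hj]
  change decide (#(univ.filter _) % 2 = 1) = !decide (#A % 2 = 1)
  rw [hA]
  cases hxi : x i
  · rw [if_neg (by simp), card_insert_of_notMem (by simp [A, hxi])]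
    rcases Nat.mod_two_eq_zero_or_one #A with h | h <;> simp [h, Nat.add_mod]
  · have : 0 < #A := card_pos.mpr ⟨i, by simp [A, hxi]⟩
    rw [if_pos rfl, card_erase_of_mem (by simp [A, hxi])]
    by_cases h : #A % 2 = 1 <;> simp [h] <;> omega

theorem card_filter_apply_zero_eq_false (m : ℕ) :
    #{x : Fin (m + 2) → Bool | x 0 = false} = 2 ^ (m + 1) := by
  have := Fintype.card_filter_piFinset_const_eq_of_mem (ι := Fin (m + 2)) univ 0 (mem_univ false)
  rw [Fintype.piFinset_univ, card_univ, Fintype.card_bool, Fintype.card_fin] at this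
  simpa using this

theorem card_filter_eval_eq_XORn {m : ℕ} (T : DTree Bool (Fin (m + 2)) Bool) (hT : T.depth ≤ m) :
    #{x : Fin (m + 2) → Bool | x 0 = false ∧ T.eval x = XORn x} = 2 ^ m := by
  set S : Finset (Fin (m + 2) → Bool) := {x | x 0 = false}
  have hhalf := T.card_filter_eval_eq_eq_card_filter_eval_ne (F := univ.erase 0)
    (by rw [card_erase_of_mem (mem_univ _), card_univ, Fintype.card_fin]; omega)
    (fun x i _ => XORn_update_not x i)
    (S := S) (fun x hx i hi => by
      simpa [S, Function.update_of_ne (ne_of_mem_erase hi).symm] using hx)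
  have hsplit := card_filter_add_card_filter_not (s := S) fun x => T.eval x = XORn x
  simp only [S, filter_filter, ne_eq] at hhalf hsplit
  rw [card_filter_apply_zero_eq_false, pow_succ] at hsplit
  omega

theorem prS_condXOR {n : ℕ} (D : (Fin n → Bool) → ℝ) (b : Bool) (S : Set (Fin n → Bool)) :
    prS (condXOR D b) S = 2 * prS D (S ∩ {x | XORn x = b}) := by
  classical
  rw [prS, prS, mul_sum]
  refine sum_congr rfl fun x _ => ?_
  by_cases hS : x ∈ S <;> by_cases hb : XORn x = b <;> simp [condXOR, hS, hb]

def spike (m : ℕ) (v : Bool) : Fin (m + 2) → Bool :=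
  fun i => if i = 0 then true else if i = 1 then v else false

theorem eq_spike_iff {m : ℕ} (x : Fin (m + 2) → Bool) :
    (x 0 = true ∧ ∀ i : Fin (m + 2), 2 ≤ (i : ℕ) → x i = false) ↔ x = spike m (x 1) := by
  constructor
  · rintro ⟨h0, htail⟩
    funext i
    by_cases hi0 : i = 0
    · simp [spike, hi0, h0]
    by_cases hi1 : i = 1
    · simp [spike, hi1]
    refine (htail i ?_).trans (by simp [spike, hi0, hi1])
    rw [Fin.ext_iff] at hi0 hi1
    simp only [Fin.val_zero, Fin.val_one] at hi0 hi1
    omega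
  · intro h
    rw [h]
    refine ⟨rfl, fun i hi => ?_⟩
    have hi0 : i ≠ 0 := fun h => by simp [h] at hi
    have hi1 : i ≠ 1 := fun h => by simp [h] at hi
    simp [spike, hi0, hi1]

theorem XORn_spike (m : ℕ) (v : Bool) : XORn (spike m v) = !v := by
  have h01 : (0 : Fin (m + 2)) ≠ 1 := by simp
  have hset : (univ.filter fun i => spike m v i = true) = if v then {0, 1} else {0} := by
    ext i
    by_cases hi0 : i = 0
    · cases v <;> simp [spike, hi0, h01]
    · cases v <;> simp [spike, hi0]
  unfold XORn
  rw [hset]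
  cases v <;> simp [card_pair h01]

theorem prS_D16 (m : ℕ) (p : (Fin (m + 2) → Bool) → Prop) [DecidablePred p] :
    prS (D16 m) {x | p x} = 99 / 100 * (1 / 2) ^ (m + 1) * #{x | p x ∧ x 0 = false} +
      1 / 200 * #{x | p x ∧ x 0 = true ∧ ∀ i : Fin (m + 2), 2 ≤ (i : ℕ) → x i = false} := by
  rw [prS_setOf]
  simp only [D16, sum_add_distrib, ← sum_filter, filter_filter, sum_const, nsmul_eq_mul]
  ring

theorem card_filter_spike_le (m : ℕ) (p : (Fin (m + 2) → Bool) → Prop) [DecidablePred p] :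
    #{x | p x ∧ x 0 = true ∧ ∀ i : Fin (m + 2), 2 ≤ (i : ℕ) → x i = false} ≤ 2 :=
  calc _ ≤ #(univ.image (spike m)) := card_le_card fun x hx => by
          rw [mem_filter, eq_spike_iff] at hx
          exact mem_image.mpr ⟨x 1, mem_univ _, hx.2.2.symm⟩
    _ ≤ 2 := card_image_le.trans_eq Fintype.card_bool

theorem filter_XORn_eq_spike (m : ℕ) (b : Bool) :
    ({x | XORn x = b ∧ x 0 = true ∧ ∀ i : Fin (m + 2), 2 ≤ (i : ℕ) → x i = false} :
      Finset (Fin (m + 2) → Bool)) = {spike m (!b)} := by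
  ext x
  rw [mem_filter, eq_spike_iff, mem_singleton, and_iff_right (mem_univ x)]
  constructor
  · rintro ⟨hb, hx⟩
    rw [hx, XORn_spike] at hb
    rw [hx, ← hb, Bool.not_not]
  · rintro rfl
    simp [spike, XORn_spike]

theorem two_pow_mul_half_pow_succ (m : ℕ) : (2 : ℝ) ^ m * (1 / 2) ^ (m + 1) = 1 / 2 := by
  rw [pow_succ, ← mul_assoc, ← mul_pow]
  norm_num

theorem prS_D16_eval_eq_XORn_lt {m : ℕ} (T : DTree Bool (Fin (m + 2)) Bool) (hT : T.depth ≤ m) :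
    prS (D16 m) {x | T.eval x = XORn x} < 2 / 3 := by
  have hlow : #{x | T.eval x = XORn x ∧ x 0 = false} = 2 ^ m := by
    simpa only [and_comm] using card_filter_eval_eq_XORn T hT
  have hhigh : (#{x | T.eval x = XORn x ∧ x 0 = true ∧
      ∀ i : Fin (m + 2), 2 ≤ (i : ℕ) → x i = false} : ℝ) ≤ 2 := by
    exact_mod_cast card_filter_spike_le m _
  rw [prS_D16, hlow]
  push_cast
  nlinarith [two_pow_mul_half_pow_succ m]

theorem prS_D16_XORn_eq (m : ℕ) (b : Bool) : prS (D16 m) {x | XORn x = b} = 1 / 2 := by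
  have hlow : #{x : Fin (m + 2) → Bool | XORn x = b ∧ x 0 = false} = 2 ^ m := by
    have := card_filter_eval_eq_XORn (.leaf b) (Nat.zero_le m)
    simp only [DTree.eval] at this
    simpa only [and_comm, eq_comm] using this
  rw [prS_D16, hlow, filter_XORn_eq_spike, card_singleton]
  push_cast
  linarith [two_pow_mul_half_pow_succ m]

theorem prS_condXOR_D16_univ (m : ℕ) (b : Bool) : prS (condXOR (D16 m) b) Set.univ = 1 := by
  rw [prS_condXOR, Set.univ_inter, prS_D16_XORn_eq]
  norm_num

theorem prS_condXOR_D16_zero_eq_false (m : ℕ) :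
    prS (condXOR (D16 m) true) {x | x 0 = false} = 99 / 100 := by
  have hlow : #{x : Fin (m + 2) → Bool | (x 0 = false ∧ XORn x = true) ∧ x 0 = false} = 2 ^ m := by
    have := card_filter_eval_eq_XORn (.leaf true) (Nat.zero_le m)
    simp only [DTree.eval] at this
    rw [← this]
    congr 1
    exact filter_congr fun x _ => by tauto
  have hhigh : #{x : Fin (m + 2) → Bool | (x 0 = false ∧ XORn x = true) ∧ x 0 = true ∧
      ∀ i : Fin (m + 2), 2 ≤ (i : ℕ) → x i = false} = 0 := by
    rw [card_eq_zero, filter_eq_empty_iff]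
    rintro x - ⟨⟨h0, -⟩, h1, -⟩
    simp [h0] at h1
  rw [prS_condXOR]
  change 2 * prS (D16 m) {x | x 0 = false ∧ XORn x = true} = _
  rw [prS_D16, hlow, hhigh]
  push_cast
  linarith [two_pow_mul_half_pow_succ m]

theorem condXOR_D16_support {m : ℕ} {b : Bool} {x : Fin (m + 2) → Bool}
    (hx : condXOR (D16 m) b x ≠ 0) (h0 : x 0 = true) : x 1 = !b := by
  have hb : XORn x = b := by
    by_contra h
    simp [condXOR, h] at hx
  have htail : ∀ i : Fin (m + 2), 2 ≤ (i : ℕ) → x i = false := by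
    by_contra h
    simp [condXOR, D16, h0, h] at hx
  rw [(eq_spike_iff x).mp ⟨h0, htail⟩, XORn_spike] at hb
  rw [← hb, Bool.not_not]

def scanTree {k m : ℕ} : List (Fin k) → DTree Bool (Fin k × Fin (m + 2)) Bool
  | [] => .leaf false
  | j :: l => .node (j, 0) fun a => bif a then .node (j, 1) fun c => .leaf !c else scanTree l

theorem scanTree_depth {k m : ℕ} (l : List (Fin k)) :
    (scanTree (m := m) l).depth ≤ l.length + 1 := by
  induction l with
  | nil => simp [scanTree, DTree.depth]
  | cons j l ih =>
    simp only [scanTree, DTree.depth, List.length_cons]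
    have : univ.sup (fun a : Bool => (bif a then DTree.node (j, (1 : Fin (m + 2)))
        (fun c => .leaf !c) else scanTree l).depth) ≤ l.length + 1 :=
      Finset.sup_le fun a _ => by cases a <;> simp [DTree.depth, ih]
    omega

theorem scanTree_eval {k m : ℕ} {b : Bool} {x : Fin k × Fin (m + 2) → Bool}
    (hx : ∀ j, x (j, 0) = true → x (j, 1) = !b) (l : List (Fin k)) :
    (scanTree l).eval x = (b && l.any fun j => x (j, 0)) := by
  induction l with
  | nil => simp [scanTree, DTree.eval]
  | cons j l ih =>
    cases h0 : x (j, 0)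
    · simp [scanTree, DTree.eval, h0, ih]
    · simp [scanTree, DTree.eval, h0, hx j h0]

theorem corrC_condXOR_D16_le (m : ℕ) :
    corrC (1 / 3) (condXOR (D16 m) false) (condXOR (D16 m) true) ≤ 42 := by
  refine Nat.sInf_le ⟨41, by norm_num, scanTree (List.finRange 41),
    by simpa using scanTree_depth (m := m) (List.finRange 41), ?_⟩
  have hsupp (b : Bool) (x : Fin 41 × Fin (m + 2) → Bool) (hx : prodD (condXOR (D16 m) b) x ≠ 0)
      (j : Fin 41) (h0 : x (j, 0) = true) : x (j, 1) = !b :=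
    condXOR_D16_support (prod_ne_zero_iff.mp hx j (mem_univ j)) h0
  have hfalse : prS (prodD (condXOR (D16 m) false))
      {x | (scanTree (List.finRange 41)).eval x = false} = 1 := by
    rw [prS_congr (S' := Set.univ) fun x hx => by simp [scanTree_eval (hsupp false x hx)],
      prS_prodD_univ, prS_condXOR_D16_univ, one_pow]
  have htrue : prS (prodD (condXOR (D16 m) true))
      {x | (scanTree (List.finRange 41)).eval x = true} = 1 - (99 / 100) ^ 41 := by
    rw [prS_congr (S' := {x | ∀ j, (fun i => x (j, i)) ∈ {y | y 0 = false}}ᶜ)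
      fun x hx => by simp [scanTree_eval (hsupp true x hx)],
      prS_compl_s16, prS_prodD_univ, prS_prodD_pi, prS_condXOR_D16_univ,
      prS_condXOR_D16_zero_eq_false, one_pow]
  rw [hfalse, htrue]
  norm_num

/-- For the Shaltiel distribution `D16 m` on `n = m + 2 ≥ 2` bits
(with probability 99/100, `0` followed by `n−1` uniform bits; with probability 1/100, `1`,
one uniform bit, then `0^{n−2}`): every deterministic decision tree of depth at most `n − 2`
errs with probability greater than `1/3` in computing `XOR_n` on `x ∼ D` (hence
`dt_{1/3}(XOR_n, D) ≥ n − 1`), while `corr_{1/3}(XOR_n, D) ≤ C`. -/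
theorem shaltiel_example :
    ∃ C : ℕ, 0 < C ∧
      ∀ m : ℕ,
        (∀ T : DTree Bool (Fin (m + 2)) Bool, T.depth ≤ m →
          prS (D16 m) {x | T.eval x = XORn x} < 2/3) ∧
        corrC (1/3) (condXOR (D16 m) false) (condXOR (D16 m) true) ≤ C :=
  ⟨42, by norm_num, fun m => ⟨prS_D16_eval_eq_XORn_lt, corrC_condXOR_D16_le m⟩⟩
end
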